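/- The sequence (β(n))_{n ≥ 1} is strictly decreasing and converges to 1 as n → ∞. -/

import Mathlib

/-!
With `t = pa + pb` and `s = 3 pc + pd`, one step of the recursion gives
`t' = t² (t + 2s)`, `s' = t³ + 4s³`, `pb' - pa' = t² (pb - pa)`, `pd' - pc' = t (pb - pa)²`
and `pc' ≥ s³`. From `n = 2` on, `2t ≤ s` is invariant, hence `t⁵ (t + 2s) ≤ s⁶ ≤ pc'²`, which
propagates the invariant `(pb - pa)² t ≤ (pd - pc) pc²`. Combined with `pc' ≥ s³ ≥ 27 pc³` it
gives `β(n+1) - 1 ≤ (β(n) - 1) / 27`, so `β(n) - 1 > 0` decreases strictly and geometrically.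
-/

/-- One step of the recursion for the ice-model boundary counts
`(pa, pb, pc, pd)` on the Sierpinski gasket `SG(n)`. -/
def iceStep : ℕ × ℕ × ℕ × ℕ → ℕ × ℕ × ℕ × ℕ
  | (a, b, c, d) =>
    ((a + b) ^ 2 * (a + 3 * c + d),
     (a + b) ^ 2 * (b + 3 * c + d),
     a ^ 2 * b + b ^ 2 * a + (3 * c + d) ^ 3,
     a ^ 3 + b ^ 3 + (3 * c + d) ^ 3)

/-- The quadruple `(pa(n), pb(n), pc(n), pd(n))`. -/
def iceSeq : ℕ → ℕ × ℕ × ℕ × ℕ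
  | 0 => (0, 1, 0, 1)
  | n + 1 => iceStep (iceSeq n)

def pa (n : ℕ) : ℕ := (iceSeq n).1
def pb (n : ℕ) : ℕ := (iceSeq n).2.1
def pc (n : ℕ) : ℕ := (iceSeq n).2.2.1
def pd (n : ℕ) : ℕ := (iceSeq n).2.2.2

noncomputable def alphaSeq (n : ℕ) : ℝ := (pa n : ℝ) / (pb n : ℝ)
noncomputable def betaSeq (n : ℕ) : ℝ := (pd n : ℝ) / (pc n : ℝ)
noncomputable def gammaSeq (n : ℕ) : ℝ := (pb n : ℝ) / (pc n : ℝ)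

open Filter Topology

lemma pa_succ (n : ℕ) : pa (n + 1) = (pa n + pb n) ^ 2 * (pa n + 3 * pc n + pd n) := rfl
lemma pb_succ (n : ℕ) : pb (n + 1) = (pa n + pb n) ^ 2 * (pb n + 3 * pc n + pd n) := rfl
lemma pc_succ (n : ℕ) :
    pc (n + 1) = pa n ^ 2 * pb n + pb n ^ 2 * pa n + (3 * pc n + pd n) ^ 3 := rfl
lemma pd_succ (n : ℕ) : pd (n + 1) = pa n ^ 3 + pb n ^ 3 + (3 * pc n + pd n) ^ 3 := rfl

lemma pa_add_pb_succ (n : ℕ) :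
    pa (n + 1) + pb (n + 1) = (pa n + pb n) ^ 2 * (pa n + pb n + 2 * (3 * pc n + pd n)) := by
  rw [pa_succ, pb_succ]; ring

lemma three_mul_pc_add_pd_succ (n : ℕ) :
    3 * pc (n + 1) + pd (n + 1) = (pa n + pb n) ^ 3 + 4 * (3 * pc n + pd n) ^ 3 := by
  rw [pc_succ, pd_succ]; ring

lemma pb_sub_pa_succ (n : ℕ) :
    (pb (n + 1) : ℝ) - pa (n + 1) = ((pa n : ℝ) + pb n) ^ 2 * ((pb n : ℝ) - pa n) := by
  rw [pa_succ, pb_succ]; push_cast; ring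

lemma pd_sub_pc_succ (n : ℕ) :
    (pd (n + 1) : ℝ) - pc (n + 1) = ((pa n : ℝ) + pb n) * ((pb n : ℝ) - pa n) ^ 2 := by
  rw [pc_succ, pd_succ]; push_cast; ring

lemma pow_three_le_pc_succ (n : ℕ) : (3 * pc n + pd n) ^ 3 ≤ pc (n + 1) := by
  rw [pc_succ]; exact Nat.le_add_left _ _

lemma pa_lt_pb (n : ℕ) : pa n < pb n := by
  induction n with
  | zero => decide
  | succ n ih =>
    rw [pa_succ, pb_succ]
    exact Nat.mul_lt_mul_of_pos_left (by omega) (pow_pos (by omega) 2)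

lemma three_mul_pc_add_pd_pos (n : ℕ) : 0 < 3 * pc n + pd n := by
  induction n with
  | zero => decide
  | succ n ih =>
    rw [three_mul_pc_add_pd_succ]
    exact Nat.add_pos_right _ (Nat.mul_pos (by norm_num) (pow_pos ih 3))

lemma pc_pos {n : ℕ} (hn : 1 ≤ n) : 0 < pc n := by
  obtain ⟨n, rfl⟩ := Nat.exists_eq_add_of_le' hn
  exact (pow_pos (three_mul_pc_add_pd_pos n) 3).trans_le (pow_three_le_pc_succ n)

lemma pc_lt_pd {n : ℕ} (hn : 1 ≤ n) : (pc n : ℝ) < pd n := by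
  obtain ⟨n, rfl⟩ := Nat.exists_eq_add_of_le' hn
  have hab : (pa n : ℝ) < pb n := by exact_mod_cast pa_lt_pb n
  rw [← sub_pos, pd_sub_pc_succ]
  have : (0 : ℝ) ≤ pa n := Nat.cast_nonneg _
  exact mul_pos (by linarith) (pow_pos (by linarith) 2)

lemma two_mul_pa_add_pb_le {n : ℕ} (hn : 2 ≤ n) : 2 * (pa n + pb n) ≤ 3 * pc n + pd n := by
  induction n, hn using Nat.le_induction with
  | base => decide
  | succ n _ ih =>
    rw [pa_add_pb_succ, three_mul_pc_add_pd_succ]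
    set t := pa n + pb n
    set s := 3 * pc n + pd n
    nlinarith [Nat.mul_le_mul ih ih, Nat.mul_le_mul_left (t * t) ih]

lemma pow_five_mul_le_pow_six {K : Type*} [Field K] [LinearOrder K] [IsStrictOrderedRing K]
    {t s : K} (ht : 0 ≤ t) (h : 2 * t ≤ s) :
    t ^ 5 * (t + 2 * s) ≤ s ^ 6 := by
  have hs : 0 ≤ s := by linarith
  calc t ^ 5 * (t + 2 * s) ≤ (s / 2) ^ 5 * (s / 2 + 2 * s) := by gcongr <;> linarith
    _ = 5 / 64 * s ^ 6 := by ring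
    _ ≤ s ^ 6 := by nlinarith [pow_nonneg hs 6]

lemma sq_pb_sub_pa_mul_le {n : ℕ} (hn : 2 ≤ n) :
    ((pb n : ℝ) - pa n) ^ 2 * (pa n + pb n) ≤ ((pd n : ℝ) - pc n) * pc n ^ 2 := by
  induction n, hn using Nat.le_induction with
  | base => norm_num [show pa 2 = 54 from rfl, show pb 2 = 63 from rfl,
      show pc 2 = 131 from rfl, show pd 2 = 134 from rfl]
  | succ n hn _ =>
    have hsum : (pa (n + 1) : ℝ) + pb (n + 1)
        = ((pa n : ℝ) + pb n) ^ 2 * ((pa n + pb n) + 2 * (3 * pc n + pd n)) := by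
      exact_mod_cast pa_add_pb_succ n
    have hJ : 2 * ((pa n : ℝ) + pb n) ≤ 3 * pc n + pd n := by
      exact_mod_cast two_mul_pa_add_pb_le hn
    have hc : (3 * (pc n : ℝ) + pd n) ^ 3 ≤ pc (n + 1) := by
      exact_mod_cast pow_three_le_pc_succ n
    rw [pb_sub_pa_succ, pd_sub_pc_succ, hsum]
    set t : ℝ := pa n + pb n
    set s : ℝ := 3 * pc n + pd n
    have ht : 0 ≤ t := by positivity
    have hts : t ^ 5 * (t + 2 * s) ≤ pc (n + 1) ^ 2 :=
      calc t ^ 5 * (t + 2 * s) ≤ s ^ 6 := pow_five_mul_le_pow_six ht hJ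
        _ = (s ^ 3) ^ 2 := by ring
        _ ≤ pc (n + 1) ^ 2 := by gcongr
    calc (t ^ 2 * (pb n - pa n)) ^ 2 * (t ^ 2 * (t + 2 * s))
        = t * (pb n - pa n) ^ 2 * (t ^ 5 * (t + 2 * s)) := by ring
      _ ≤ t * (pb n - pa n) ^ 2 * pc (n + 1) ^ 2 := by gcongr

lemma betaSeq_sub_one {n : ℕ} (hn : 1 ≤ n) :
    betaSeq n - 1 = ((pd n : ℝ) - pc n) / pc n := by
  rw [betaSeq, div_sub_one (by exact_mod_cast (pc_pos hn).ne')]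

lemma one_lt_betaSeq {n : ℕ} (hn : 1 ≤ n) : 1 < betaSeq n := by
  have hc : (0 : ℝ) < pc n := by exact_mod_cast pc_pos hn
  rw [← sub_pos, betaSeq_sub_one hn]
  exact div_pos (sub_pos.2 (pc_lt_pd hn)) hc

lemma betaSeq_succ_sub_one_le {n : ℕ} (hn : 1 ≤ n) :
    27 * (betaSeq (n + 1) - 1) ≤ betaSeq n - 1 := by
  rcases hn.eq_or_lt with rfl | hn₂
  · norm_num [betaSeq, show pc 1 = 1 from rfl, show pd 1 = 2 from rfl,
      show pc 2 = 131 from rfl, show pd 2 = 134 from rfl]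
  have hc : (0 : ℝ) < pc n := by exact_mod_cast pc_pos hn
  have hc' : (0 : ℝ) < pc (n + 1) := by exact_mod_cast pc_pos (by omega : 1 ≤ n + 1)
  have hf : (0 : ℝ) ≤ pd n - pc n := (sub_pos.2 (pc_lt_pd hn)).le
  have hs : (3 * (pc n : ℝ) + pd n) ^ 3 ≤ pc (n + 1) := by
    exact_mod_cast pow_three_le_pc_succ n
  have h27 : 27 * (pc n : ℝ) ^ 3 ≤ pc (n + 1) := by
    have : 3 * (pc n : ℝ) ≤ 3 * pc n + pd n := le_add_of_nonneg_right (Nat.cast_nonneg _)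
    calc (27 : ℝ) * pc n ^ 3 = (3 * (pc n : ℝ)) ^ 3 := by ring
      _ ≤ (3 * (pc n : ℝ) + pd n) ^ 3 := by gcongr
      _ ≤ pc (n + 1) := hs
  rw [betaSeq_sub_one hn, betaSeq_sub_one (by omega), pd_sub_pc_succ, mul_div_assoc',
    div_le_div_iff₀ hc' hc]
  calc 27 * ((pa n + pb n) * ((pb n : ℝ) - pa n) ^ 2) * pc n
      = 27 * (((pb n : ℝ) - pa n) ^ 2 * (pa n + pb n)) * pc n := by ring
    _ ≤ 27 * (((pd n : ℝ) - pc n) * pc n ^ 2) * pc n := by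
        gcongr 27 * ?_ * _; exact sq_pb_sub_pa_mul_le hn₂
    _ = (pd n - pc n) * (27 * pc n ^ 3) := by ring
    _ ≤ (pd n - pc n) * pc (n + 1) := by gcongr

lemma tendsto_zero_of_le_mul {u : ℕ → ℝ} {q : ℝ} (hq₀ : 0 ≤ q) (hq₁ : q < 1)
    (hu : ∀ n, 0 ≤ u n) (h : ∀ n, u (n + 1) ≤ q * u n) : Tendsto u atTop (𝓝 0) := by
  refine squeeze_zero hu (fun n => le_geom hq₀ n fun k _ => h k) ?_
  simpa using (tendsto_pow_atTop_nhds_zero_of_lt_one hq₀ hq₁).mul_const (u 0)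

theorem stmt_6 :
    (∀ n : ℕ, 1 ≤ n → betaSeq (n + 1) < betaSeq n) ∧
    Filter.Tendsto betaSeq Filter.atTop (nhds 1) := by
  refine ⟨fun n hn => by linarith [betaSeq_succ_sub_one_le hn, one_lt_betaSeq hn], ?_⟩
  have h : Tendsto (fun k => betaSeq (k + 1) - 1) atTop (𝓝 0) :=
    tendsto_zero_of_le_mul (q := 1 / 27) (by norm_num) (by norm_num)
      (fun k => sub_nonneg.2 (one_lt_betaSeq (by omega)).le)
      (fun k => by linarith [betaSeq_succ_sub_one_le (by omega : 1 ≤ k + 1)])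
  rw [← tendsto_add_atTop_iff_nat 1]
  simpa using h.add_const 1
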